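/- For every infinite set B ⊆ ℕ there exists an unbounded modulus function f such that the f-density of B equals one, i.e. lim_{u→∞} f(|B ∩ {1,...,u}|)/f(u) = 1. -/

import Mathlib

open Filter Finset Topology
open scoped Classical

def IsModulus (f : ℝ → ℝ) : Prop :=
  (∀ x, 0 ≤ x → 0 ≤ f x) ∧
  (∀ x, 0 ≤ x → (f x = 0 ↔ x = 0)) ∧
  (∀ x, 0 ≤ x → ∀ y, 0 ≤ y → f (x + y) ≤ f x + f y) ∧
  (∀ x y, 0 ≤ x → x ≤ y → f x ≤ f y) ∧
  ContinuousWithinAt f (Set.Ici 0) 0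

def IsUnboundedModulus (f : ℝ → ℝ) : Prop :=
  IsModulus f ∧ ∀ M : ℝ, ∃ x, 0 ≤ x ∧ M < f x

def MemLambda (l : ℕ → ℝ) : Prop :=
  l 1 = 1 ∧ Monotone l ∧ (∀ n, l (n + 1) ≤ l n + 1) ∧ (∀ n, 0 < l n) ∧
  Tendsto l atTop atTop

noncomputable def Iseg (l : ℕ → ℝ) (n : ℕ) : Finset ℕ :=
  (Finset.Icc 1 n).filter (fun t => (n : ℝ) - l n + 1 ≤ (t : ℝ))

def FLStatConv {X : Type*} [NormedAddCommGroup X] (f : ℝ → ℝ) (l : ℕ → ℝ)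
    (x : ℕ → X) (L : X) : Prop :=
  ∀ ξ : ℝ, 0 < ξ →
    Tendsto (fun n => f (((Iseg l n).filter (fun t => ξ ≤ ‖x t - L‖)).card) / f (l n))
      atTop (nhds 0)

def FLDensityZero (f : ℝ → ℝ) (l : ℕ → ℝ) (T : Set ℕ) : Prop :=
  Tendsto (fun n => f (((Iseg l n).filter (fun t => t ∈ T)).card) / f (l n))
    atTop (nhds 0)

def FStatConv {X : Type*} [NormedAddCommGroup X] (f : ℝ → ℝ)
    (x : ℕ → X) (L : X) : Prop :=
  ∀ ξ : ℝ, 0 < ξ →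
    Tendsto (fun u => f (((Finset.Icc 1 u).filter (fun t => ξ ≤ ‖x t - L‖)).card) / f (u : ℝ))
      atTop (nhds 0)

/-!
Write `b u` for the number of elements of `B` in `{1, …, u}`; it tends to infinity. Choose scales
`1 = s₀ < s₁ < ⋯` with `s_{k+1} ≥ 2 s_k`, growing fast enough that `b u ≥ s_k` as soon as
`u ≥ s_{k+1}`, and put `f x = ∑ₖ min (x / s_k) 1`. Each summand is a bounded modulus and the
doubling makes the series converge, so `f` is a modulus, and up to an additive error `≤ 3` it counts
the scales below `x`; in particular it is unbounded. For `s_{m+1} ≤ u < s_{m+2}` we have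
`s_m ≤ b u ≤ u`, so `f (b u)` and `f u` differ by at most `3` while `f u → ∞`.
-/

open Asymptotics

theorem tendsto_div_nhds_one_of_abs_sub_le {α : Type*} {l : Filter α} {g h : α → ℝ} (C : ℝ)
    (hg : Tendsto g l atTop) (hgh : ∀ᶠ a in l, |h a - g a| ≤ C) :
    Tendsto (fun a => h a / g a) l (𝓝 1) := by
  have hbdd : (h - g) =O[l] (fun _ => (1 : ℝ)) :=
    IsBigO.of_bound C (by filter_upwards [hgh] with a ha; simpa using ha)
  have hequiv : h ~[l] g :=
    hbdd.trans_isLittleO ((isLittleO_one_left_iff ℝ).2 (tendsto_norm_atTop_atTop.comp hg))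
  exact (isEquivalent_iff_tendsto_one (hg.eventually_ne_atTop 0)).1 hequiv

theorem IsUnboundedModulus.tendsto_atTop {f : ℝ → ℝ} (hf : IsUnboundedModulus f) :
    Tendsto (fun u : ℕ => f u) atTop atTop := by
  obtain ⟨⟨-, -, -, hmono, -⟩, hunbdd⟩ := hf
  refine tendsto_atTop_atTop_of_monotone
    (fun u v huv => hmono _ _ u.cast_nonneg (by exact_mod_cast huv)) fun M => ?_
  obtain ⟨x, hx, hMx⟩ := hunbdd M
  exact ⟨⌈x⌉₊, hMx.le.trans (hmono _ _ hx (Nat.le_ceil x))⟩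

theorem min_add_one_le {a b : ℝ} (ha : 0 ≤ a) (hb : 0 ≤ b) :
    min (a + b) 1 ≤ min a 1 + min b 1 := by
  simp only [min_def]
  split_ifs <;> linarith

noncomputable def scaleModulus (s : ℕ → ℝ) (x : ℝ) : ℝ := ∑' k, min (x / s k) 1

structure IsDoubling (s : ℕ → ℝ) : Prop where
  pos_zero : 0 < s 0
  two_mul_le : ∀ k, 2 * s k ≤ s (k + 1)

namespace IsDoubling

variable {s : ℕ → ℝ}

theorem two_pow_mul_le (hs : IsDoubling s) (n j : ℕ) : 2 ^ j * s n ≤ s (j + n) := by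
  induction j with
  | zero => simp
  | succ j ih =>
    calc 2 ^ (j + 1) * s n = 2 * (2 ^ j * s n) := by ring
      _ ≤ 2 * s (j + n) := by linarith
      _ ≤ s (j + 1 + n) := by rw [Nat.add_right_comm]; exact hs.two_mul_le _

theorem pos (hs : IsDoubling s) (k : ℕ) : 0 < s k := by
  have h := hs.two_pow_mul_le 0 k
  rw [add_zero] at h
  exact lt_of_lt_of_le (mul_pos (by positivity) hs.pos_zero) h

theorem monotone (hs : IsDoubling s) : Monotone s :=
  monotone_nat_of_le_succ fun k => by linarith [hs.pos k, hs.two_mul_le k]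

theorem min_div_one_nonneg (hs : IsDoubling s) {x : ℝ} (hx : 0 ≤ x) (k : ℕ) :
    0 ≤ min (x / s k) 1 :=
  le_min (div_nonneg hx (hs.pos k).le) zero_le_one

theorem min_div_one_le (hs : IsDoubling s) {x : ℝ} (hx : 0 ≤ x) (n j : ℕ) :
    min (x / s (j + n)) 1 ≤ x / s n * (1 / 2) ^ j := by
  have h2j : (0 : ℝ) < 2 ^ j := by positivity
  calc min (x / s (j + n)) 1 ≤ x / s (j + n) := min_le_left _ _
    _ ≤ x / (2 ^ j * s n) :=
      div_le_div_of_nonneg_left hx (mul_pos h2j (hs.pos n)) (hs.two_pow_mul_le n j)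
    _ = x / s n * (1 / 2) ^ j := by rw [one_div_pow, mul_one_div, div_div, mul_comm]

theorem summable_min_div_one (hs : IsDoubling s) {x : ℝ} (hx : 0 ≤ x) :
    Summable fun k => min (x / s k) 1 :=
  Summable.of_nonneg_of_le (hs.min_div_one_nonneg hx)
    (fun k => by simpa using hs.min_div_one_le hx 0 k)
    (summable_geometric_two.mul_left _)

theorem tsum_min_div_one_add_le (hs : IsDoubling s) {x : ℝ} (hx : 0 ≤ x) (n : ℕ) :
    ∑' j, min (x / s (j + n)) 1 ≤ x / s n * 2 := by
  rw [← tsum_geometric_two, ← tsum_mul_left]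
  exact Summable.tsum_le_tsum (hs.min_div_one_le hx n)
    ((summable_nat_add_iff n).2 (hs.summable_min_div_one hx)) (summable_geometric_two.mul_left _)

theorem scaleModulus_nonneg (hs : IsDoubling s) {x : ℝ} (hx : 0 ≤ x) : 0 ≤ scaleModulus s x :=
  tsum_nonneg (hs.min_div_one_nonneg hx)

theorem scaleModulus_pos (hs : IsDoubling s) {x : ℝ} (hx : 0 < x) : 0 < scaleModulus s x :=
  (hs.summable_min_div_one hx.le).tsum_pos (hs.min_div_one_nonneg hx.le) 0
    (lt_min (div_pos hx hs.pos_zero) one_pos)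

theorem scaleModulus_mono (hs : IsDoubling s) {x y : ℝ} (hx : 0 ≤ x) (hxy : x ≤ y) :
    scaleModulus s x ≤ scaleModulus s y :=
  Summable.tsum_le_tsum
    (fun k => min_le_min (div_le_div_of_nonneg_right hxy (hs.pos k).le) le_rfl)
    (hs.summable_min_div_one hx) (hs.summable_min_div_one (hx.trans hxy))

theorem scaleModulus_add_le (hs : IsDoubling s) {x y : ℝ} (hx : 0 ≤ x) (hy : 0 ≤ y) :
    scaleModulus s (x + y) ≤ scaleModulus s x + scaleModulus s y := by
  rw [scaleModulus, scaleModulus, scaleModulus,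
    ← (hs.summable_min_div_one hx).tsum_add (hs.summable_min_div_one hy)]
  refine Summable.tsum_le_tsum (fun k => ?_)
    (hs.summable_min_div_one (add_nonneg hx hy))
    ((hs.summable_min_div_one hx).add (hs.summable_min_div_one hy))
  rw [add_div]
  exact min_add_one_le (div_nonneg hx (hs.pos k).le) (div_nonneg hy (hs.pos k).le)

theorem scaleModulus_le_mul (hs : IsDoubling s) {x : ℝ} (hx : 0 ≤ x) :
    scaleModulus s x ≤ x / s 0 * 2 := by
  simpa [scaleModulus] using hs.tsum_min_div_one_add_le hx 0

theorem add_one_le_scaleModulus (hs : IsDoubling s) {m : ℕ} {x : ℝ} (hx : s m ≤ x) :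
    m + 1 ≤ scaleModulus s x := by
  have hx0 : 0 ≤ x := (hs.pos m).le.trans hx
  have hone : ∀ k ∈ range (m + 1), min (x / s k) 1 = 1 := fun k hk =>
    min_eq_right <| (one_le_div (hs.pos k)).2 <|
      (hs.monotone (Nat.lt_succ_iff.1 (mem_range.1 hk))).trans hx
  calc (m : ℝ) + 1 = ∑ k ∈ range (m + 1), min (x / s k) 1 := by
        rw [sum_congr rfl hone]; simp
    _ ≤ scaleModulus s x :=
        (hs.summable_min_div_one hx0).sum_le_tsum _ fun k _ => hs.min_div_one_nonneg hx0 k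

theorem scaleModulus_le_add_three (hs : IsDoubling s) {m : ℕ} {x : ℝ} (hx0 : 0 ≤ x)
    (hx : x ≤ s (m + 1)) : scaleModulus s x ≤ m + 3 := by
  rw [scaleModulus, ← (hs.summable_min_div_one hx0).sum_add_tsum_nat_add (m + 1)]
  have hhead : ∑ k ∈ range (m + 1), min (x / s k) 1 ≤ m + 1 := by
    simpa using sum_le_sum fun k (_ : k ∈ range (m + 1)) => min_le_right (x / s k) 1
  have htail : ∑' j, min (x / s (j + (m + 1))) 1 ≤ 2 := by
    calc _ ≤ x / s (m + 1) * 2 := hs.tsum_min_div_one_add_le hx0 (m + 1)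
      _ ≤ 1 * 2 := by gcongr; exact (div_le_one (hs.pos _)).2 hx
      _ = 2 := one_mul 2
  linarith

theorem scaleModulus_le_scaleModulus_add_three (hs : IsDoubling s) {m : ℕ} {x y : ℝ}
    (hx : s m ≤ x) (hy0 : 0 ≤ y) (hy : y ≤ s (m + 2)) :
    scaleModulus s y ≤ scaleModulus s x + 3 := by
  have hlow := hs.add_one_le_scaleModulus hx
  have hup := hs.scaleModulus_le_add_three (m := m + 1) hy0 hy
  push_cast at hup
  linarith

theorem isUnboundedModulus_scaleModulus (hs : IsDoubling s) :
    IsUnboundedModulus (scaleModulus s) := by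
  refine ⟨⟨fun x => hs.scaleModulus_nonneg, fun x hx => ⟨fun h => ?_, ?_⟩,
    fun x hx y hy => hs.scaleModulus_add_le hx hy, fun x y hx hxy => hs.scaleModulus_mono hx hxy,
    ?_⟩, fun M => ?_⟩
  · by_contra hx0
    exact (hs.scaleModulus_pos (lt_of_le_of_ne hx (Ne.symm hx0))).ne' h
  · rintro rfl
    simp [scaleModulus]
  · have h0 : scaleModulus s 0 = 0 := by simp [scaleModulus]
    rw [ContinuousWithinAt, h0]
    refine squeeze_zero' (eventually_nhdsWithin_of_forall fun x hx => hs.scaleModulus_nonneg hx)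
      (eventually_nhdsWithin_of_forall fun x hx => hs.scaleModulus_le_mul hx) ?_
    have : Continuous fun x : ℝ => x / s 0 * 2 := by fun_prop
    simpa using (this.tendsto 0).mono_left nhdsWithin_le_nhds
  · refine ⟨s ⌈M⌉₊, (hs.pos _).le, ?_⟩
    linarith [Nat.le_ceil M, hs.add_one_le_scaleModulus (le_refl (s ⌈M⌉₊))]

end IsDoubling

theorem exists_doubling_scale_of_tendsto {b : ℕ → ℕ} (hb : Tendsto b atTop atTop) :
    ∃ s : ℕ → ℕ, s 0 = 1 ∧ (∀ k, 2 * s k ≤ s (k + 1)) ∧ ∀ k u, s (k + 1) ≤ u → s k ≤ b u := by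
  choose N hN using fun c => eventually_atTop.1 (tendsto_atTop.1 hb c)
  exact ⟨fun k => Nat.rec 1 (fun _ a => max (2 * a) (N a)) k, rfl, fun k => le_max_left _ _,
    fun k u hu => hN _ u ((le_max_right _ _).trans hu)⟩

theorem exists_isUnboundedModulus_tendsto_div_nhds_one {b : ℕ → ℕ}
    (hb : Tendsto b atTop atTop) (hle : ∀ u, b u ≤ u) :
    ∃ f : ℝ → ℝ, IsUnboundedModulus f ∧ Tendsto (fun u : ℕ => f (b u) / f u) atTop (𝓝 1) := by
  obtain ⟨s, hs0, hs2, hsb⟩ := exists_doubling_scale_of_tendsto hb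
  have hs : IsDoubling fun k => (s k : ℝ) := ⟨by simp [hs0], fun k => by exact_mod_cast hs2 k⟩
  have hsucc : StrictMono fun n => s (n + 1) := strictMono_nat_of_lt_succ fun n => by
    have : 0 < s (n + 1) := by exact_mod_cast hs.pos (n + 1)
    linarith [hs2 (n + 1)]
  have hF := hs.isUnboundedModulus_scaleModulus
  refine ⟨_, hF, tendsto_div_nhds_one_of_abs_sub_le 3 hF.tendsto_atTop ?_⟩
  filter_upwards [eventually_ge_atTop (s 1)] with u hu
  obtain ⟨m, hmu, hum⟩ : ∃ m, s (m + 1) ≤ u ∧ u < s (m + 2) := by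
    obtain ⟨m, h₁, h₂⟩ := hsucc.exists_between_of_tendsto_atTop hsucc.tendsto_atTop
      (x := u + 1) (by simpa using Nat.lt_succ_of_le hu)
    exact ⟨m, Nat.lt_succ_iff.1 h₁, h₂⟩
  have hbu : (s m : ℝ) ≤ b u := by exact_mod_cast hsb m u hmu
  have hmono := hs.scaleModulus_mono (b u).cast_nonneg (Nat.cast_le.2 (hle u))
  have hge := hs.scaleModulus_le_scaleModulus_add_three hbu u.cast_nonneg
    (by exact_mod_cast hum.le)
  rw [abs_sub_le_iff]
  constructor <;> linarith

theorem tendsto_card_filter_Icc_mem_atTop {B : Set ℕ} (hB : B.Infinite) :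
    Tendsto (fun u => ((Icc 1 u).filter (fun t => t ∈ B)).card) atTop atTop := by
  refine tendsto_atTop_atTop_of_monotone
    (fun u v huv => card_le_card (filter_subset_filter _ (Icc_subset_Icc_right huv))) fun c => ?_
  obtain ⟨S, hSB, hS⟩ := (hB.sdiff (Set.finite_singleton 0)).exists_subset_card_eq c
  refine ⟨S.sup id, hS ▸ card_le_card fun t ht => ?_⟩
  obtain ⟨htB, ht0⟩ := hSB ht
  simp only [mem_filter, mem_Icc]
  exact ⟨⟨Nat.one_le_iff_ne_zero.2 ht0, le_sup (f := id) ht⟩, htB⟩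

theorem stmt16 (B : Set ℕ) (hB : B.Infinite) :
    ∃ f : ℝ → ℝ, IsUnboundedModulus f ∧
      Tendsto (fun u => f (((Finset.Icc 1 u).filter (fun t => t ∈ B)).card) / f (u : ℝ))
        atTop (nhds 1) :=
  exists_isUnboundedModulus_tendsto_div_nhds_one (tendsto_card_filter_Icc_mem_atTop hB)
    fun u => (card_filter_le _ _).trans (by simp)
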